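/- For every natural number m and positive integer k, E_m^{(k)}(x) = ∑_{n=0}^{m} S₂(m,n) · Ch_n^{(k)}(x) as polynomials in ℚ[x]. -/

import Mathlib

open Finset Polynomial

/-- Signed Stirling numbers of the first kind. -/
def s1 : ℕ → ℕ → ℚ
  | 0, 0 => 1
  | 0, _ + 1 => 0
  | n + 1, 0 => -(n : ℚ) * s1 n 0
  | n + 1, l + 1 => s1 n l - (n : ℚ) * s1 n (l + 1)

/-- Stirling numbers of the second kind. -/
def S2 : ℕ → ℕ → ℚ
  | 0, 0 => 1
  | 0, _ + 1 => 0
  | _ + 1, 0 => 0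
  | n + 1, l + 1 => S2 n l + ((l : ℚ) + 1) * S2 n (l + 1)

/-- The binomial coefficient polynomial C(x, j) = x(x-1)⋯(x-j+1)/j!. -/
noncomputable def binPoly (j : ℕ) : Polynomial ℚ :=
  (j.factorial : ℚ)⁻¹ • descPochhammer ℚ j

/-- Order-k Changhee polynomials of the first kind. -/
noncomputable def ChP (k n : ℕ) : Polynomial ℚ :=
  ∑ i ∈ range (n + 1),
    Polynomial.C ((-1)^i * (n.factorial : ℚ) / 2^i * ((k + i - 1).choose i)) * binPoly (n - i)

/-- Order-k Euler polynomials. -/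
noncomputable def EP (k l : ℕ) : Polynomial ℚ :=
  ∑ i ∈ range (l + 1),
    Polynomial.C ((l.choose i : ℚ)) * Polynomial.X ^ (l - i) *
      Polynomial.C (∑ j ∈ range (i + 1),
        (-1/2 : ℚ)^j * ((k + j - 1).choose j) * (j.factorial : ℚ) * S2 i j)

lemma S2_succ_zero (n : ℕ) : S2 (n + 1) 0 = 0 := rfl

lemma S2_succ_succ (n l : ℕ) : S2 (n+1) (l+1) = S2 n l + ((l:ℚ)+1) * S2 n (l+1) := rfl

lemma S2_zero_of_lt : ∀ {n l : ℕ}, n < l → S2 n l = 0 := by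
  intro n
  induction n with
  | zero => intro l hl; match l, hl with
    | l + 1, _ => rfl
  | succ n ih =>
    intro l hl
    match l, hl with
    | l + 1, hl =>
      have h1 : n < l := by omega
      have h2 : n < l + 1 := by omega
      simp [S2, ih h1, ih h2]

lemma Xpow_eq (m : ℕ) : (X : ℚ[X])^m = ∑ r ∈ range (m+1), C (S2 m r) * descPochhammer ℚ r := by
  induction m with
  | zero => simp [S2]
  | succ m ih =>
    have hx : ∀ r : ℕ, X * descPochhammer ℚ r
        = descPochhammer ℚ (r+1) + C (r:ℚ) * descPochhammer ℚ r := by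
      intro r
      rw [descPochhammer_succ_right, ← C_eq_natCast]
      ring
    have key : ∑ r ∈ range (m+1), C ((r:ℚ) * S2 m r) * descPochhammer ℚ r
        = ∑ r ∈ range (m+1), C (((r:ℚ)+1) * S2 m (r+1)) * descPochhammer ℚ (r+1) := by
      have h2 : ∑ r ∈ range (m+2), C ((r:ℚ) * S2 m r) * descPochhammer ℚ r
          = ∑ r ∈ range (m+1), C (((r:ℚ)+1) * S2 m (r+1)) * descPochhammer ℚ (r+1) := by
        rw [Finset.sum_range_succ']
        push_cast
        simp
      have h3 := Finset.sum_range_succ (fun r => C ((r:ℚ) * S2 m r) * descPochhammer ℚ r) (m+1)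
      rw [← h2, h3, S2_zero_of_lt (Nat.lt_succ_self m)]
      simp
    calc (X:ℚ[X])^(m+1) = X * X^m := by ring
      _ = ∑ r ∈ range (m+1), C (S2 m r) * (X * descPochhammer ℚ r) := by
          rw [ih, Finset.mul_sum]; exact Finset.sum_congr rfl (fun r _ => by ring)
      _ = ∑ r ∈ range (m+1), (C (S2 m r) * descPochhammer ℚ (r+1)
            + C ((r:ℚ) * S2 m r) * descPochhammer ℚ r) := by
          refine Finset.sum_congr rfl (fun r _ => ?_)
          rw [hx r, map_mul]; ring
      _ = ∑ r ∈ range (m+1), C (S2 m r) * descPochhammer ℚ (r+1)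
            + ∑ r ∈ range (m+1), C (((r:ℚ)+1) * S2 m (r+1)) * descPochhammer ℚ (r+1) := by
          rw [Finset.sum_add_distrib, key]
      _ = ∑ r ∈ range (m+1), C (S2 (m+1) (r+1)) * descPochhammer ℚ (r+1) := by
          rw [← Finset.sum_add_distrib]
          refine Finset.sum_congr rfl (fun r _ => ?_)
          rw [S2_succ_succ, map_add]; ring
      _ = ∑ r ∈ range (m+2), C (S2 (m+1) r) * descPochhammer ℚ r := by
          conv_rhs => rw [Finset.sum_range_succ']
          simp [S2_succ_zero]

lemma conv : ∀ m j r : ℕ, ∑ i ∈ range (m+1), (m.choose i : ℚ) * S2 i j * S2 (m-i) r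
    = ((j+r).choose j : ℚ) * S2 m (j+r) := by
  intro m
  induction m with
  | zero =>
    intro j r
    rcases j with _|j <;> rcases r with _|r <;> simp [S2]
  | succ m ih =>
    intro j r
    have hB : ∑ i ∈ range (m+1), (m.choose i : ℚ) * S2 i j * S2 ((m-i)+1) r
        = (∑ i ∈ range (m+1), (m.choose (i+1) : ℚ) * S2 (i+1) j * S2 (m-i) r)
          + ((m+1).choose 0 : ℚ) * S2 0 j * S2 (m+1) r := by
      have h2 : ∑ i ∈ range (m+2), (m.choose i : ℚ) * S2 i j * S2 (m+1-i) r
          = (∑ i ∈ range (m+1), (m.choose (i+1) : ℚ) * S2 (i+1) j * S2 (m-i) r)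
            + ((m+1).choose 0 : ℚ) * S2 0 j * S2 (m+1) r := by
        rw [Finset.sum_range_succ']
        simp
      have h3 := Finset.sum_range_succ
        (fun i => (m.choose i : ℚ) * S2 i j * S2 (m+1-i) r) (m+1)
      rw [h3, Nat.choose_succ_self] at h2
      simp only [Nat.cast_zero, zero_mul, add_zero] at h2
      rw [← h2]
      refine Finset.sum_congr rfl (fun i hi => ?_)
      have : m + 1 - i = (m - i) + 1 := by
        simp only [Finset.mem_range] at hi; omega
      rw [this]
    have step : ∑ i ∈ range (m+2), ((m+1).choose i : ℚ) * S2 i j * S2 (m+1-i) r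
        = (∑ i ∈ range (m+1), (m.choose i : ℚ) * S2 (i+1) j * S2 (m-i) r)
        + ∑ i ∈ range (m+1), (m.choose i : ℚ) * S2 i j * S2 ((m-i)+1) r := by
      rw [Finset.sum_range_succ']
      simp only [Nat.succ_sub_succ, Nat.sub_zero]
      have e : ∀ k ∈ range (m+1), ((m+1).choose (k+1) : ℚ) * S2 (k+1) j * S2 (m-k) r
          = (m.choose k : ℚ) * S2 (k+1) j * S2 (m-k) r
            + (m.choose (k+1) : ℚ) * S2 (k+1) j * S2 (m-k) r := by
        intro k _
        rw [Nat.choose_succ_succ]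
        push_cast
        ring
      rw [Finset.sum_congr rfl e, Finset.sum_add_distrib, add_assoc, hB]
    rw [step]
    rcases j with _|j <;> rcases r with _|r
    · simp [S2_succ_zero]
    · have e1 : ∀ i ∈ range (m+1), (m.choose i : ℚ) * S2 i 0 * S2 ((m-i)+1) (r+1)
          = (m.choose i : ℚ) * S2 i 0 * S2 (m-i) r
            + ((r:ℚ)+1) * ((m.choose i : ℚ) * S2 i 0 * S2 (m-i) (r+1)) := by
        intro i _; rw [S2_succ_succ]; ring
      rw [Finset.sum_congr rfl e1, Finset.sum_add_distrib, ← Finset.mul_sum, ih, ih]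
      simp only [S2_succ_zero, mul_zero, zero_mul, Finset.sum_const_zero, zero_add,
        Nat.zero_add, Nat.choose_zero_right, Nat.cast_one, one_mul, S2_succ_succ]
    · have e1 : ∀ i ∈ range (m+1), (m.choose i : ℚ) * S2 (i+1) (j+1) * S2 (m-i) 0
          = (m.choose i : ℚ) * S2 i j * S2 (m-i) 0
            + ((j:ℚ)+1) * ((m.choose i : ℚ) * S2 i (j+1) * S2 (m-i) 0) := by
        intro i _; rw [S2_succ_succ]; ring
      have e2 : ∀ i ∈ range (m+1), (m.choose i : ℚ) * S2 i (j+1) * S2 ((m-i)+1) 0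
          = 0 := by
        intro i _; rw [S2_succ_zero]; ring
      rw [Finset.sum_congr rfl e1, Finset.sum_congr rfl e2, Finset.sum_add_distrib,
        ← Finset.mul_sum, ih, ih, Finset.sum_const_zero]
      simp only [Nat.add_zero, Nat.choose_self, Nat.cast_one, one_mul, S2_succ_succ, add_zero]
    · -- j+1, r+1
      have e1 : ∀ i ∈ range (m+1), (m.choose i : ℚ) * S2 (i+1) (j+1) * S2 (m-i) (r+1)
          = (m.choose i : ℚ) * S2 i j * S2 (m-i) (r+1)
            + ((j:ℚ)+1) * ((m.choose i : ℚ) * S2 i (j+1) * S2 (m-i) (r+1)) := by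
        intro i _; rw [S2_succ_succ]; ring
      have e2 : ∀ i ∈ range (m+1), (m.choose i : ℚ) * S2 i (j+1) * S2 ((m-i)+1) (r+1)
          = (m.choose i : ℚ) * S2 i (j+1) * S2 (m-i) r
            + ((r:ℚ)+1) * ((m.choose i : ℚ) * S2 i (j+1) * S2 (m-i) (r+1)) := by
        intro i _; rw [S2_succ_succ]; ring
      rw [Finset.sum_congr rfl e1, Finset.sum_congr rfl e2, Finset.sum_add_distrib,
        Finset.sum_add_distrib, ← Finset.mul_sum, ← Finset.mul_sum, ih, ih, ih]
      have i1 : j + (r+1) = j + r + 1 := by omega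
      have i2 : (j+1) + r = j + r + 1 := by omega
      have i3 : (j+1) + (r+1) = (j + r + 1) + 1 := by omega
      rw [i1, i2, i3, S2_succ_succ, Nat.choose_succ_succ]
      push_cast
      ring

noncomputable def uu (k j : ℕ) : ℚ := (-1/2:ℚ)^j * ((k+j-1).choose j) * (j.factorial:ℚ)

lemma L1 (m k : ℕ) : EP k m = ∑ j ∈ range (m+1), ∑ r ∈ range (m+1),
    C (uu k j * (((j+r).choose j : ℚ) * S2 m (j+r))) * descPochhammer ℚ r := by
  have hterm : ∀ i ∈ range (m+1),
      Polynomial.C ((m.choose i : ℚ)) * Polynomial.X ^ (m-i) *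
        Polynomial.C (∑ j ∈ range (i + 1),
          (-1/2 : ℚ)^j * ((k + j - 1).choose j) * (j.factorial : ℚ) * S2 i j)
      = ∑ j ∈ range (m+1), ∑ r ∈ range (m+1),
          C (uu k j * ((m.choose i : ℚ) * S2 i j * S2 (m-i) r)) * descPochhammer ℚ r := by
    intro i hi
    have him : i ≤ m := by simp only [Finset.mem_range] at hi; omega
    have hj : ∑ j ∈ range (i + 1),
        (-1/2 : ℚ)^j * ((k + j - 1).choose j) * (j.factorial : ℚ) * S2 i j
        = ∑ j ∈ range (m+1), uu k j * S2 i j := by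
      rw [Finset.sum_congr rfl (g := fun j => uu k j * S2 i j)
        (fun j _ => by simp only [uu])]
      refine Finset.sum_subset (Finset.range_subset_range.mpr (by omega)) ?_
      intro x hx hnx
      simp only [Finset.mem_range] at hx hnx
      rw [S2_zero_of_lt (by omega : i < x), mul_zero]
    have hX : (X : ℚ[X])^(m-i) = ∑ r ∈ range (m+1), C (S2 (m-i) r) * descPochhammer ℚ r := by
      rw [Xpow_eq]
      refine Finset.sum_subset (Finset.range_subset_range.mpr (by omega)) ?_
      intro x hx hnx
      simp only [Finset.mem_range] at hx hnx
      rw [S2_zero_of_lt (by omega : m - i < x), map_zero, zero_mul]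
    rw [hj, hX, map_sum]
    rw [Finset.mul_sum]
    refine Finset.sum_congr rfl (fun j _ => ?_)
    rw [Finset.mul_sum, Finset.sum_mul]
    refine Finset.sum_congr rfl (fun r _ => ?_)
    simp only [map_mul]
    ring
  rw [EP, Finset.sum_congr rfl hterm]
  have hrhs : ∀ j ∈ range (m+1), ∀ r ∈ range (m+1),
      C (uu k j * (((j+r).choose j : ℚ) * S2 m (j+r))) * descPochhammer ℚ r
      = ∑ i ∈ range (m+1),
          C (uu k j * ((m.choose i : ℚ) * S2 i j * S2 (m-i) r)) * descPochhammer ℚ r := by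
    intro j _ r _
    rw [← conv m j r, Finset.mul_sum, map_sum, Finset.sum_mul]
  rw [Finset.sum_congr rfl (fun j hj => Finset.sum_congr rfl (fun r hr => hrhs j hj r hr))]
  rw [Finset.sum_comm]
  exact Finset.sum_congr rfl (fun j _ => Finset.sum_comm)

lemma L2 (m k : ℕ) : (∑ n ∈ range (m + 1), Polynomial.C (S2 m n) * ChP k n)
    = ∑ j ∈ range (m+1), ∑ r ∈ range (m+1),
        C (uu k j * (((j+r).choose j : ℚ) * S2 m (j+r))) * descPochhammer ℚ r := by
  have hchp : ∀ n ∈ range (m+1), Polynomial.C (S2 m n) * ChP k n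
      = ∑ i ∈ range (n+1),
          C (S2 m n * ((-1)^i * (n.factorial:ℚ)/2^i * ((k+i-1).choose i))
              * ((n-i).factorial:ℚ)⁻¹) * descPochhammer ℚ (n-i) := by
    intro n _
    rw [ChP, Finset.mul_sum]
    refine Finset.sum_congr rfl (fun i _ => ?_)
    rw [binPoly, Polynomial.smul_eq_C_mul, ← mul_assoc, ← mul_assoc, ← map_mul, ← map_mul]
  rw [Finset.sum_congr rfl hchp]
  have hT : ∀ j ∈ range (m+1), (∑ r ∈ range (m+1),
      C (uu k j * (((j+r).choose j : ℚ) * S2 m (j+r))) * descPochhammer ℚ r)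
      = ∑ r ∈ range (m+1-j),
          C (uu k j * (((j+r).choose j : ℚ) * S2 m (j+r))) * descPochhammer ℚ r := by
    intro j hj
    simp only [Finset.mem_range] at hj
    symm
    refine Finset.sum_subset (Finset.range_subset_range.mpr (by omega)) ?_
    intro x hx hnx
    simp only [Finset.mem_range] at hx hnx
    rw [S2_zero_of_lt (by omega : m < j + x), mul_zero, mul_zero, map_zero, zero_mul]
  rw [Finset.sum_congr rfl hT, Finset.sum_sigma', Finset.sum_sigma']
  refine Finset.sum_nbij' (i := fun p => ⟨p.2, p.1 - p.2⟩) (j := fun p => ⟨p.1 + p.2, p.1⟩)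
    ?_ ?_ ?_ ?_ ?_
  · rintro ⟨n, i⟩ h
    simp only [Finset.mem_sigma, Finset.mem_range] at h ⊢
    omega
  · rintro ⟨j, r⟩ h
    simp only [Finset.mem_sigma, Finset.mem_range] at h ⊢
    omega
  · rintro ⟨n, i⟩ h
    simp only [Finset.mem_sigma, Finset.mem_range] at h
    simp only [Sigma.mk.inj_iff]
    exact ⟨by omega, HEq.rfl⟩
  · rintro ⟨j, r⟩ h
    simp only [Sigma.mk.inj_iff, Nat.add_sub_cancel_left]
  · rintro ⟨n, i⟩ h
    simp only [Finset.mem_sigma, Finset.mem_range] at h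
    have hin : i ≤ n := by omega
    simp only
    rw [show i + (n - i) = n by omega]
    congr 1
    congr 1
    have hfact : (n.choose i : ℚ) * (i.factorial : ℚ) * ((n-i).factorial : ℚ)
        = (n.factorial : ℚ) := by
      exact_mod_cast congrArg (Nat.cast (R := ℚ))
        (Nat.choose_mul_factorial_mul_factorial hin)
    have h2 : ((n-i).factorial : ℚ) ≠ 0 := by
      exact_mod_cast Nat.factorial_ne_zero _
    rw [uu, ← hfact]
    field_simp
    have h3 : ((-1/2:ℚ))^i * 2^i = (-1)^i := by rw [← mul_pow]; norm_num
    linear_combination (-(S2 m n * (n.choose i : ℚ) * ((k + i - 1).choose i : ℚ))) * h3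

theorem euler_poly_eq_stirling_changhee_poly (m k : ℕ) (hk : 1 ≤ k) :
    EP k m = ∑ n ∈ range (m + 1), Polynomial.C (S2 m n) * ChP k n :=
  (L1 m k).trans (L2 m k).symm
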